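/- arXiv:1405.2017 — 2 statements merged into one kernel-verified Lean document; each statement's English description precedes it below -/
import Mathlib

section
/- Let λ > 0, ρ_o > 0, T_d > 0, P_u > 0, η_c > 2, η_d > 2, α > 0. Then ∫₀^{P_u} x^α · (2 x^{2/η_d − 1} (πλ)^{η_c/η_d} e^{−πλ(x/(T_d ρ_o))^{2/η_c}}) / (η_c (T_d ρ_o)^{2/η_d} γ(η_c/η_d, πλ(P_u/(T_dρ_o))^{2/η_c})) dx = (T_d ρ_o)^α · γ(αη_c/2 + η_c/η_d, πλ(P_u/(T_dρ_o))^{2/η_c}) / ((πλ)^{αη_c/2} · γ(η_c/η_d, πλ(P_u/(T_dρ_o))^{2/η_c})). -/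
open Real MeasureTheory

/-- Lower incomplete gamma function γ(a,b) = ∫₀^b x^{a-1} e^{-x} dx. -/
noncomputable def lowerGamma (a b : ℝ) : ℝ := ∫ x in (0:ℝ)..b, x ^ (a - 1) * Real.exp (-x)

/-!
The substitution `u = πλ (x / (T_d ρ_o))^{2/η_c}` is monotone on `[0, P_u]` and turns
`x^α f(x) dx` into a constant multiple of the incomplete-gamma integrand `u^{s-1} e^{-u} du`
with `s = α η_c / 2 + η_c / η_d`. Change of variables along a monotone map
(`intervalIntegral.integral_deriv_smul_comp_of_deriv_nonneg`) requires no integrability.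
-/

open Set intervalIntegral

theorem integral_rpow_mul_exp_neg_mul_rpow_eq_lowerGamma {k q T : ℝ} (s : ℝ) (hk : 0 < k)
    (hq : 0 < q) (hT : 0 ≤ T) :
    ∫ x in (0:ℝ)..T, x ^ (q * s - 1) * exp (-(k * x ^ q)) =
      lowerGamma s (k * T ^ q) / (q * k ^ s) := by
  have hIoo : Ioo (min 0 T) (max 0 T) = Ioo 0 T := by rw [min_eq_left hT, max_eq_right hT]
  have hsubst := integral_deriv_smul_comp_of_deriv_nonneg (a := 0) (b := T)
    (f := fun x => k * x ^ q) (f' := fun x => k * (q * x ^ (q - 1)))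
    (g := fun u => u ^ (s - 1) * exp (-u))
    (continuous_const.mul (continuous_rpow_const hq.le)).continuousOn
    (fun x hx => (hasDerivAt_rpow_const (Or.inl (hIoo ▸ hx).1.ne')).const_mul k)
    (fun x hx => have := (hIoo ▸ hx).1; by positivity)
  simp only [smul_eq_mul, Function.comp_def, zero_rpow hq.ne', mul_zero] at hsubst
  have jacobian : EqOn (fun x => x ^ (q * s - 1) * exp (-(k * x ^ q)))
      (fun x => (q * k ^ s)⁻¹ *
        (k * (q * x ^ (q - 1)) * ((k * x ^ q) ^ (s - 1) * exp (-(k * x ^ q))))) (Ioo 0 T) := by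
    intro x hx
    have hx : 0 < x := hx.1
    have hk' : k ^ s = k ^ (s - 1) * k := by rw [← rpow_add_one hk.ne', sub_add_cancel]
    have hx' : x ^ (q * s - 1) = x ^ (q - 1) * x ^ (q * (s - 1)) := by
      rw [← rpow_add hx]; ring_nf
    simp only [mul_rpow hk.le (rpow_nonneg hx.le q), ← rpow_mul hx.le, hk', hx']
    field_simp
  rw [integral_congr_Ioo_of_le hT jacobian, intervalIntegral.integral_const_mul, hsubst,
    lowerGamma, inv_mul_eq_div]

theorem integral_rpow_mul_exp_neg_mul_div_rpow_eq_lowerGamma {b c q T : ℝ} (s : ℝ) (hb : 0 < b)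
    (hc : 0 < c) (hq : 0 < q) (hT : 0 ≤ T) :
    ∫ x in (0:ℝ)..T, x ^ (q * s - 1) * exp (-(b * (x / c) ^ q)) =
      c ^ (q * s) * lowerGamma s (b * (T / c) ^ q) / (q * b ^ s) := by
  have hscale : ∀ x, 0 ≤ x → b * (x / c) ^ q = b / c ^ q * x ^ q := fun x hx => by
    rw [div_rpow hx hc.le]; ring
  have hcq : 0 < c ^ q := rpow_pos_of_pos hc q
  rw [integral_congr fun x hx => by rw [hscale x (uIcc_of_le hT ▸ hx).1],
    integral_rpow_mul_exp_neg_mul_rpow_eq_lowerGamma s (div_pos hb hcq) hq hT, hscale T hT,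
    div_rpow hb.le hcq.le, ← rpow_mul hc.le]
  field_simp

theorem stmt5_general (lam ρo Td Pu ηc ηd α : ℝ) (hlam : 0 < lam) (hρ : 0 < ρo) (hTd : 0 < Td)
    (hPu : 0 < Pu) (hc : 2 < ηc) :
    (∫ x in (0:ℝ)..Pu,
        x ^ α * (2 * x ^ (2 / ηd - 1) * (π * lam) ^ (ηc / ηd) *
            Real.exp (-(π * lam * (x / (Td * ρo)) ^ (2 / ηc)))) /
          (ηc * (Td * ρo) ^ (2 / ηd) *
            lowerGamma (ηc / ηd) (π * lam * (Pu / (Td * ρo)) ^ (2 / ηc)))) =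
      (Td * ρo) ^ α *
          lowerGamma (α * ηc / 2 + ηc / ηd) (π * lam * (Pu / (Td * ρo)) ^ (2 / ηc)) /
        ((π * lam) ^ (α * ηc / 2) *
          lowerGamma (ηc / ηd) (π * lam * (Pu / (Td * ρo)) ^ (2 / ηc))) := by
  have hηc : 0 < ηc := by linarith
  have hb : 0 < π * lam := by positivity
  have hc0 : 0 < Td * ρo := mul_pos hTd hρ
  have hexp : 2 / ηc * (α * ηc / 2 + ηc / ηd) = α + 2 / ηd := by field_simp
  have hintegrand : EqOn
      (fun x => x ^ α * (2 * x ^ (2 / ηd - 1) * (π * lam) ^ (ηc / ηd) *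
        exp (-(π * lam * (x / (Td * ρo)) ^ (2 / ηc)))))
      (fun x => 2 * (π * lam) ^ (ηc / ηd) * (x ^ (2 / ηc * (α * ηc / 2 + ηc / ηd) - 1) *
        exp (-(π * lam * (x / (Td * ρo)) ^ (2 / ηc))))) (Ioo 0 Pu) := fun x hx => by
    simp only [hexp, add_sub_assoc, rpow_add hx.1]; ring
  rw [intervalIntegral.integral_div, integral_congr_Ioo_of_le hPu.le hintegrand,
    intervalIntegral.integral_const_mul,
    integral_rpow_mul_exp_neg_mul_div_rpow_eq_lowerGamma _ hb hc0 (by positivity) hPu.le,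
    hexp]
  -- both sides end in `/ lowerGamma (ηc / ηd) _`; matching it avoids proving it nonzero
  simp only [← div_div]
  congr 1
  rw [rpow_add hc0, rpow_add hb]
  field_simp

theorem stmt5 (lam ρo Td Pu ηc ηd α : ℝ) (hlam : 0 < lam) (hρ : 0 < ρo) (hTd : 0 < Td)
    (hPu : 0 < Pu) (hc : 2 < ηc) (hd : 2 < ηd) (hα : 0 < α) :
    (∫ x in (0:ℝ)..Pu,
        x ^ α * (2 * x ^ (2 / ηd - 1) * (π * lam) ^ (ηc / ηd) *
            Real.exp (-(π * lam * (x / (Td * ρo)) ^ (2 / ηc)))) /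
          (ηc * (Td * ρo) ^ (2 / ηd) *
            lowerGamma (ηc / ηd) (π * lam * (Pu / (Td * ρo)) ^ (2 / ηc)))) =
      (Td * ρo) ^ α *
          lowerGamma (α * ηc / 2 + ηc / ηd) (π * lam * (Pu / (Td * ρo)) ^ (2 / ηc)) /
        ((π * lam) ^ (α * ηc / 2) *
          lowerGamma (ηc / ηd) (π * lam * (Pu / (Td * ρo)) ^ (2 / ηc))) :=
  stmt5_general lam ρo Td Pu ηc ηd α hlam hρ hTd hPu hc
end

section
/- Let λ > 0, ρ_o > 0, P_u > 0, η_c > 2, η_d > 2 and 0 < T_d ≤ 1. Let X̃_c have pdf f(x) = 2πλ x^{2/η_c−1} e^{−πλ(x/ρ_o)^{2/η_c}} / (η_c ρ_o^{2/η_c}(1 − e^{−πλ(P_u/ρ_o)^{2/η_c}})) on [0,P_u], and X_d independent with pdf 2x^{2/η_d−1}/(η_d P_u^{2/η_d}) on [0,P_u]. Then P{X̃_c < X_d/T_d} = 1 − T_d^{2/η_d} + T_d^{2/η_d}/(1 − e^{−πλ(P_u/ρ_o)^{2/η_c}}) − η_c (T_d ρ_o)^{2/η_d} γ(η_c/η_d,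 πλ(P_u/ρ_o)^{2/η_c}) / (η_d P_u^{2/η_d} (πλ)^{η_c/η_d} (1 − e^{−πλ(P_u/ρ_o)^{2/η_c}})). -/
/-!
Conditioning on `X_d = y`, the probability is `F_c (min (y / T_d) P_u)`, where the distribution
function of `X̃_c` is `F_c m = (1 - e^{-πλ (m/ρ_o)^{2/η_c}}) / (1 - e^{-πλ (P_u/ρ_o)^{2/η_c}})`.
Because `T_d ≤ 1`, the cap `P_u` is reached exactly for `y ≥ T_d P_u`, where
`F_c = 1`, giving `1 - T_d^{2/η_d}`. On `[0, T_d P_u]` the remaining term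
`∫ y^{2/η_d - 1} e^{-c y^{2/η_c}} dy` becomes a lower incomplete gamma integral after the
substitution `t = c y^{2/η_c}`; the same substitution with `γ(1, b) = 1 - e^{-b}` computes `F_c`.
-/

open Real MeasureTheory

open Set Filter intervalIntegral
open scoped Interval

theorem intervalIntegral.integral_comp_rpow_of_pos {E : Type*} [NormedAddCommGroup E]
    [NormedSpace ℝ E] (g : ℝ → E) {p U : ℝ} (hp : 0 < p) (hU : 0 ≤ U) :
    ∫ x in (0:ℝ)..U, (p * x ^ (p - 1)) • g (x ^ p) = ∫ y in (0:ℝ)..U ^ p, g y := by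
  have himage : (· ^ p) '' Ioc 0 U = Ioc 0 (U ^ p) := by
    ext y
    constructor
    · rintro ⟨x, hx, rfl⟩
      exact ⟨rpow_pos_of_pos hx.1 p, rpow_le_rpow hx.1.le hx.2 hp.le⟩
    · rintro ⟨hy0, hyU⟩
      exact ⟨y ^ p⁻¹, ⟨rpow_pos_of_pos hy0 _, (rpow_inv_le_iff_of_pos hy0.le hU hp).2 hyU⟩,
        rpow_inv_rpow hy0.le hp.ne'⟩
  rw [integral_of_le hU, integral_of_le (by positivity), ← himage,
    integral_image_eq_integral_abs_deriv_smul measurableSet_Ioc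
      (fun x hx => (hasDerivAt_rpow_const (Or.inl hx.1.ne')).hasDerivWithinAt)
      ((rpow_left_injOn hp.ne').mono fun x hx => hx.1.le)]
  refine setIntegral_congr_fun measurableSet_Ioc fun x hx => ?_
  rw [abs_of_nonneg (by have := hx.1; positivity)]

theorem lowerGamma_one (b : ℝ) : lowerGamma 1 b = 1 - exp (-b) := by
  simp [lowerGamma]

theorem integral_rpow_mul_exp_neg_mul {a c V : ℝ} (hc : 0 < c) (hV : 0 ≤ V) :
    ∫ u in (0:ℝ)..V, u ^ (a - 1) * exp (-(c * u)) = c ^ (-a) * lowerGamma a (c * V) := by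
  have hscale : ∀ u ∈ uIcc 0 V,
      u ^ (a - 1) * exp (-(c * u)) = c ^ (1 - a) * ((c * u) ^ (a - 1) * exp (-(c * u))) := by
    intro u hu
    rw [uIcc_of_le hV] at hu
    rw [mul_rpow hc.le hu.1, ← mul_assoc, ← mul_assoc, ← rpow_add hc]
    norm_num
  rw [integral_congr hscale, intervalIntegral.integral_const_mul,
    integral_comp_mul_left (fun t => t ^ (a - 1) * exp (-t)) hc.ne', mul_zero, smul_eq_mul,
    ← mul_assoc, lowerGamma, ← rpow_neg_one c, ← rpow_add hc]
  ring_nf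

theorem integral_rpow_mul_exp_neg_mul_rpow_eq_lowerGamma_s7 {p q c U : ℝ} (hp : 0 < p) (hc : 0 < c)
    (hU : 0 ≤ U) :
    ∫ y in (0:ℝ)..U, y ^ (q - 1) * exp (-(c * y ^ p)) =
      c ^ (-(q / p)) / p * lowerGamma (q / p) (c * U ^ p) := by
  -- only away from `y = 0`: there `0 ^ 0 = 1` can make the two sides differ
  have hsubst : ∀ᵐ y, y ∈ Ι 0 U → y ^ (q - 1) * exp (-(c * y ^ p)) =
      p⁻¹ * ((p * y ^ (p - 1)) • ((y ^ p) ^ (q / p - 1) * exp (-(c * y ^ p)))) := by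
    refine Eventually.of_forall fun y hy => ?_
    rw [uIoc_of_le hU] at hy
    rw [smul_eq_mul, ← rpow_mul hy.1.le, mul_sub, mul_div_cancel₀ _ hp.ne', mul_one]
    have hsplit : y ^ (q - 1) = y ^ (p - 1) * y ^ (q - p) := by
      rw [← rpow_add hy.1]; ring_nf
    rw [hsplit]
    field_simp
  rw [integral_congr_ae hsubst, intervalIntegral.integral_const_mul,
    integral_comp_rpow_of_pos (fun u => u ^ (q / p - 1) * exp (-(c * u))) hp hU,
    integral_rpow_mul_exp_neg_mul hc (by positivity)]
  ring

theorem integral_rpow_mul_exp_neg_mul_rpow_self {p c U : ℝ} (hp : 0 < p) (hc : 0 < c)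
    (hU : 0 ≤ U) :
    ∫ y in (0:ℝ)..U, y ^ (p - 1) * exp (-(c * y ^ p)) = (1 - exp (-(c * U ^ p))) / (c * p) := by
  rw [integral_rpow_mul_exp_neg_mul_rpow_eq_lowerGamma_s7 hp hc hU, div_self hp.ne', lowerGamma_one,
    rpow_neg_one]
  field_simp

theorem integral_rpow_mul_one_sub_exp_neg_mul_rpow {p q c U : ℝ} (hp : 0 < p) (hq : 0 < q)
    (hc : 0 < c) (hU : 0 ≤ U) :
    ∫ y in (0:ℝ)..U, y ^ (q - 1) * (1 - exp (-(c * y ^ p))) =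
      U ^ q / q - c ^ (-(q / p)) / p * lowerGamma (q / p) (c * U ^ p) := by
  have hpow : IntervalIntegrable (fun y : ℝ => y ^ (q - 1)) volume 0 U :=
    intervalIntegrable_rpow' (by linarith)
  have hexp : Continuous fun y : ℝ => exp (-(c * y ^ p)) := by
    fun_prop (disch := exact hp.le)
  simp only [mul_sub, mul_one]
  rw [integral_sub hpow (hpow.mul_continuousOn hexp.continuousOn),
    integral_rpow (Or.inl (by linarith)), sub_add_cancel,
    zero_rpow hq.ne', sub_zero, integral_rpow_mul_exp_neg_mul_rpow_eq_lowerGamma_s7 hp hc hU]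

/-- Distribution function of `X̃_c` on `[0, Pu]`. -/
noncomputable def truncCellularCdf (lam ρo ηc Pu m : ℝ) : ℝ :=
  (1 - exp (-(π * lam * (m / ρo) ^ (2 / ηc)))) / (1 - exp (-(π * lam * (Pu / ρo) ^ (2 / ηc))))

/-- Density of `X_d`. -/
noncomputable def d2dPdf (ηd Pu y : ℝ) : ℝ := 2 * y ^ (2 / ηd - 1) / (ηd * Pu ^ (2 / ηd))

section

variable {lam ρo Pu Td ηc ηd : ℝ}

theorem integral_truncCellularPdf (hlam : 0 < lam) (hρ : 0 < ρo) (hηc : 0 < ηc) {m : ℝ}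
    (hm : 0 ≤ m) :
    ∫ x in (0:ℝ)..m,
      2 * π * lam * x ^ (2 / ηc - 1) * exp (-(π * lam * (x / ρo) ^ (2 / ηc))) /
        (ηc * ρo ^ (2 / ηc) * (1 - exp (-(π * lam * (Pu / ρo) ^ (2 / ηc))))) =
      truncCellularCdf lam ρo ηc Pu m := by
  have hp : 0 < 2 / ηc := by positivity
  set c := π * lam / ρo ^ (2 / ηc) with hc
  have hscale : ∀ x ∈ uIcc 0 m, 2 * π * lam * x ^ (2 / ηc - 1) *
      exp (-(π * lam * (x / ρo) ^ (2 / ηc))) =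
        2 * π * lam * (x ^ (2 / ηc - 1) * exp (-(c * x ^ (2 / ηc)))) := by
    intro x hx
    rw [uIcc_of_le hm] at hx
    rw [div_rpow hx.1 hρ.le, mul_div_assoc', div_mul_eq_mul_div]
    ring
  rw [intervalIntegral.integral_div, integral_congr hscale, intervalIntegral.integral_const_mul,
    integral_rpow_mul_exp_neg_mul_rpow_self hp (by positivity) hm, truncCellularCdf,
    div_rpow hm hρ.le,
    show c * m ^ (2 / ηc) = π * lam * (m ^ (2 / ηc) / ρo ^ (2 / ηc)) by ring, hc]
  field_simp

theorem truncCellularCdf_self (hlam : 0 < lam) (hρ : 0 < ρo) (hPu : 0 < Pu) :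
    truncCellularCdf lam ρo ηc Pu Pu = 1 :=
  div_self (sub_pos.2 (exp_lt_one_iff.2 (neg_lt_zero.2 (by positivity)))).ne'

theorem integral_d2dPdf_mul_truncCellularCdf_upper (hlam : 0 < lam) (hρ : 0 < ρo) (hPu : 0 < Pu)
    (hηd : 0 < ηd) (hTd0 : 0 < Td) (hTd1 : Td ≤ 1) :
    ∫ y in Td * Pu..Pu, d2dPdf ηd Pu y * truncCellularCdf lam ρo ηc Pu (min (y / Td) Pu) =
      1 - Td ^ (2 / ηd) := by
  have hTPP : Td * Pu ≤ Pu := mul_le_of_le_one_left hPu.le hTd1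
  have hcapped : ∀ y ∈ uIcc (Td * Pu) Pu,
      d2dPdf ηd Pu y * truncCellularCdf lam ρo ηc Pu (min (y / Td) Pu) =
        2 / (ηd * Pu ^ (2 / ηd)) * y ^ (2 / ηd - 1) := by
    intro y hy
    rw [uIcc_of_le hTPP] at hy
    rw [min_eq_right ((le_div_iff₀ hTd0).2 (by linarith [hy.1])),
      truncCellularCdf_self hlam hρ hPu, d2dPdf]
    ring
  rw [integral_congr hcapped, intervalIntegral.integral_const_mul,
    integral_rpow (Or.inl (by linarith [show 0 < 2 / ηd by positivity])), sub_add_cancel,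
    mul_rpow hTd0.le hPu.le]
  field_simp

theorem integral_d2dPdf_mul_truncCellularCdf_lower (hlam : 0 < lam) (hρ : 0 < ρo) (hPu : 0 < Pu)
    (hηc : 0 < ηc) (hηd : 0 < ηd) (hTd0 : 0 < Td) :
    ∫ y in (0:ℝ)..Td * Pu, d2dPdf ηd Pu y * truncCellularCdf lam ρo ηc Pu (min (y / Td) Pu) =
      Td ^ (2 / ηd) / (1 - exp (-(π * lam * (Pu / ρo) ^ (2 / ηc)))) -
        ηc * (Td * ρo) ^ (2 / ηd) * lowerGamma (ηc / ηd) (π * lam * (Pu / ρo) ^ (2 / ηc)) /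
          (ηd * Pu ^ (2 / ηd) * (π * lam) ^ (ηc / ηd) *
            (1 - exp (-(π * lam * (Pu / ρo) ^ (2 / ηc))))) := by
  set Z := 1 - exp (-(π * lam * (Pu / ρo) ^ (2 / ηc))) with hZdef
  have hZ : 0 < Z := sub_pos.2 (exp_lt_one_iff.2 (neg_lt_zero.2 (by positivity)))
  have hTP : 0 ≤ Td * Pu := by positivity
  have hTρ : 0 < (Td * ρo) ^ (2 / ηc) := by positivity
  set c := π * lam / (Td * ρo) ^ (2 / ηc) with hc
  have huncapped : ∀ y ∈ uIcc 0 (Td * Pu),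
      d2dPdf ηd Pu y * truncCellularCdf lam ρo ηc Pu (min (y / Td) Pu) =
        2 / (ηd * Pu ^ (2 / ηd) * Z) *
          (y ^ (2 / ηd - 1) * (1 - exp (-(c * y ^ (2 / ηc))))) := by
    intro y hy
    rw [uIcc_of_le hTP] at hy
    rw [min_eq_left ((div_le_iff₀ hTd0).2 (by linarith [hy.2])), truncCellularCdf, ← hZdef,
      d2dPdf, div_div, div_rpow hy.1 (by positivity), hc]
    field_simp
  have hscaled : c * (Td * Pu) ^ (2 / ηc) = π * lam * (Pu / ρo) ^ (2 / ηc) := by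
    rw [hc, div_rpow hPu.le hρ.le, mul_rpow hTd0.le hPu.le, mul_rpow hTd0.le hρ.le]
    field_simp
  have hexponent : 2 / ηd / (2 / ηc) = ηc / ηd := by field_simp
  have hc_pow : c ^ (-(ηc / ηd)) = (Td * ρo) ^ (2 / ηd) / (π * lam) ^ (ηc / ηd) := by
    rw [rpow_neg (by positivity), hc, div_rpow (by positivity) hTρ.le,
      ← rpow_mul (by positivity), show 2 / ηc * (ηc / ηd) = 2 / ηd by field_simp, inv_div]
  rw [integral_congr huncapped, intervalIntegral.integral_const_mul,
    integral_rpow_mul_one_sub_exp_neg_mul_rpow (by positivity) (by positivity) (by positivity) hTP,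
    hexponent, hscaled, hc_pow, mul_rpow hTd0.le hPu.le]
  field_simp

theorem intervalIntegrable_d2dPdf_mul_truncCellularCdf (hηc : 0 < ηc) (hηd : 0 < ηd)
    (a b : ℝ) :
    IntervalIntegrable
      (fun y => d2dPdf ηd Pu y * truncCellularCdf lam ρo ηc Pu (min (y / Td) Pu)) volume a b := by
  have hpdf : IntervalIntegrable (d2dPdf ηd Pu) volume a b :=
    ((intervalIntegrable_rpow' (by linarith [show 0 < 2 / ηd by positivity])).const_mul
      2).div_const _
  have hcdf : Continuous fun y => truncCellularCdf lam ρo ηc Pu (min (y / Td) Pu) := by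
    unfold truncCellularCdf
    fun_prop (disch := positivity)
  exact hpdf.mul_continuousOn hcdf.continuousOn

end

theorem stmt7 (lam ρo Pu Td ηc ηd : ℝ) (hlam : 0 < lam) (hρ : 0 < ρo) (hPu : 0 < Pu)
    (hc : 2 < ηc) (hd : 2 < ηd) (hTd0 : 0 < Td) (hTd1 : Td ≤ 1) :
    (∫ y in (0:ℝ)..Pu,
        (2 * y ^ (2 / ηd - 1) / (ηd * Pu ^ (2 / ηd))) *
          ∫ x in (0:ℝ)..(min (y / Td) Pu),
            2 * π * lam * x ^ (2 / ηc - 1) * Real.exp (-(π * lam * (x / ρo) ^ (2 / ηc))) /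
              (ηc * ρo ^ (2 / ηc) *
                (1 - Real.exp (-(π * lam * (Pu / ρo) ^ (2 / ηc)))))) =
      1 - Td ^ (2 / ηd) +
        Td ^ (2 / ηd) / (1 - Real.exp (-(π * lam * (Pu / ρo) ^ (2 / ηc)))) -
        ηc * (Td * ρo) ^ (2 / ηd) * lowerGamma (ηc / ηd) (π * lam * (Pu / ρo) ^ (2 / ηc)) /
          (ηd * Pu ^ (2 / ηd) * (π * lam) ^ (ηc / ηd) *
            (1 - Real.exp (-(π * lam * (Pu / ρo) ^ (2 / ηc))))) := by
  have hηc : 0 < ηc := by linarith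
  have hηd : 0 < ηd := by linarith
  rw [integral_congr
      (g := fun y => d2dPdf ηd Pu y * truncCellularCdf lam ρo ηc Pu (min (y / Td) Pu))
      fun y hy => ?inner,
    ← integral_add_adjacent_intervals (b := Td * Pu)
      (intervalIntegrable_d2dPdf_mul_truncCellularCdf hηc hηd _ _)
      (intervalIntegrable_d2dPdf_mul_truncCellularCdf hηc hηd _ _),
    integral_d2dPdf_mul_truncCellularCdf_lower hlam hρ hPu hηc hηd hTd0,
    integral_d2dPdf_mul_truncCellularCdf_upper hlam hρ hPu hηd hTd0 hTd1]
  · ring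
  case inner =>
    rw [uIcc_of_le hPu.le] at hy
    rw [integral_truncCellularPdf hlam hρ hηc (le_min (div_nonneg hy.1 hTd0.le) hPu.le)]
    rfl
end
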